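/- arXiv:2007.09145 — 6 statements merged into one kernel-verified Lean document; each statement's English description precedes it below -/
import Mathlib

section
/- If F : E → J and G : H → J are bounded operators between Hilbert spaces with F F* = G G*, then there exist contractions C : E → H and D : H → E with F = G C and G = F D; moreover if F and G are injective then C D = id and D C restricted appropriately is the identity, so C is invertible. -/
/-! Douglas' lemma: `F F* = G G*` means `‖F* x‖ = ‖G* x‖` for all `x`, so `G* x ↦ F* x` is a
well-defined contraction on the range of `G*`. Extending it to all of `H` and taking the adjoint
gives `C` with `F = G C`; `D` comes from the symmetric argument. When `F` and `G` are injective,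
`G = G C D` and `F = F D C` force `C D = id` and `D C = id`. -/

open ContinuousLinearMap

theorem LinearMap.exists_norm_le_one_comp_eq_of_norm_le {𝕜 E H J : Type*} [RCLike 𝕜]
    [NormedAddCommGroup E] [NormedSpace 𝕜 E] [CompleteSpace E]
    [NormedAddCommGroup H] [InnerProductSpace 𝕜 H] [CompleteSpace H] [AddCommGroup J] [Module 𝕜 J]
    (A : J →ₗ[𝕜] E) (B : J →ₗ[𝕜] H) (hAB : ∀ x, ‖A x‖ ≤ ‖B x‖) :
    ∃ V : H →L[𝕜] E, ‖V‖ ≤ 1 ∧ ∀ x, V (B x) = A x := by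
  set K := (LinearMap.range B).topologicalClosure
  have : CompleteSpace K := (LinearMap.range B).isClosed_topologicalClosure.completeSpace_coe
  let e : J →ₗ[𝕜] K := B.codRestrict K fun x ↦ (LinearMap.range B).le_topologicalClosure ⟨x, rfl⟩
  have he : DenseRange e := by
    rw [DenseRange, Topology.IsInducing.subtypeVal.dense_iff, ← Set.range_comp]
    exact fun y ↦ (LinearMap.range B).topologicalClosure_coe ▸ y.2
  have hAe : ∀ x, ‖A x‖ ≤ 1 * ‖e x‖ := fun x ↦ (one_mul ‖B x‖).symm ▸ hAB x
  -- Extend `B x ↦ A x` by continuity to the closure of the range of `B`, and by `0` on its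
  -- orthogonal complement.
  refine ⟨A.extendOfNorm e ∘L K.orthogonalProjectionOnto, ?_, fun x ↦ ?_⟩
  · calc _ ≤ ‖A.extendOfNorm e‖ * ‖K.orthogonalProjectionOnto‖ := opNorm_comp_le _ _
      _ ≤ 1 * 1 := by
        gcongr
        exacts [LinearMap.opNorm_extendOfNorm_le he zero_le_one hAe,
          K.orthogonalProjectionOnto_norm_le]
      _ = 1 := one_mul 1
  · rw [ContinuousLinearMap.comp_apply, show B x = (e x : H) from rfl,
      K.orthogonalProjectionOnto_mem_subspace_eq_self, LinearMap.extendOfNorm_eq he ⟨1, hAe⟩]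

namespace ContinuousLinearMap

section

variable {𝕜 E H J : Type*} [RCLike 𝕜]
  [NormedAddCommGroup E] [InnerProductSpace 𝕜 E] [CompleteSpace E]
  [NormedAddCommGroup H] [InnerProductSpace 𝕜 H] [CompleteSpace H]
  [NormedAddCommGroup J] [InnerProductSpace 𝕜 J] [CompleteSpace J]

theorem norm_adjoint_apply_eq_of_comp_adjoint_eq {F : E →L[𝕜] J} {G : H →L[𝕜] J}
    (hFG : F ∘L adjoint F = G ∘L adjoint G) (x : J) : ‖adjoint F x‖ = ‖adjoint G x‖ := by
  rw [← sq_eq_sq₀ (norm_nonneg _) (norm_nonneg _), apply_norm_sq_eq_inner_adjoint_left,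
    apply_norm_sq_eq_inner_adjoint_left, adjoint_adjoint, adjoint_adjoint, hFG]

theorem exists_norm_le_one_eq_comp_of_norm_adjoint_le (F : E →L[𝕜] J) (G : H →L[𝕜] J)
    (hFG : ∀ x, ‖adjoint F x‖ ≤ ‖adjoint G x‖) : ∃ C : E →L[𝕜] H, ‖C‖ ≤ 1 ∧ F = G ∘L C := by
  obtain ⟨V, hV, hVG⟩ := LinearMap.exists_norm_le_one_comp_eq_of_norm_le
    (adjoint F : J →ₗ[𝕜] E) (adjoint G : J →ₗ[𝕜] H) hFG
  refine ⟨adjoint V, (LinearIsometryEquiv.norm_map adjoint V).trans_le hV, ?_⟩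
  rw [← adjoint_adjoint F, ← adjoint_adjoint G, ← adjoint_comp]
  exact congrArg adjoint (ext hVG).symm

end

theorem eq_id_of_comp_eq_self {R M N : Type*} [Semiring R]
    [TopologicalSpace M] [AddCommMonoid M] [Module R M] [TopologicalSpace N] [AddCommMonoid N]
    [Module R N] {G : M →L[R] N} (hG : Function.Injective G) {T : M →L[R] M} (h : G ∘L T = G) :
    T = ContinuousLinearMap.id R M :=
  ext fun x ↦ hG congr($h x)

end ContinuousLinearMap

/-- If `F : E → J` and `G : H → J` are bounded operators between Hilbert spaces
with `F F* = G G*`, then there are contractions `C : E → H` and `D : H → E` with `F = G C` and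
`G = F D`; moreover, if `F` and `G` are injective then `C D = id` and `D C = id`, so `C` is
invertible. -/
theorem factorization_of_equal_defects
    {E H J : Type*} [NormedAddCommGroup E] [InnerProductSpace ℂ E] [CompleteSpace E]
    [NormedAddCommGroup H] [InnerProductSpace ℂ H] [CompleteSpace H]
    [NormedAddCommGroup J] [InnerProductSpace ℂ J] [CompleteSpace J]
    (F : E →L[ℂ] J) (G : H →L[ℂ] J)
    (hFG : F.comp (ContinuousLinearMap.adjoint F) = G.comp (ContinuousLinearMap.adjoint G)) :
    ∃ (C : E →L[ℂ] H) (D : H →L[ℂ] E),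
      ‖C‖ ≤ 1 ∧ ‖D‖ ≤ 1 ∧ F = G.comp C ∧ G = F.comp D ∧
      (Function.Injective F → Function.Injective G →
        C.comp D = ContinuousLinearMap.id ℂ H ∧ D.comp C = ContinuousLinearMap.id ℂ E) := by
  have hnorm := norm_adjoint_apply_eq_of_comp_adjoint_eq hFG
  obtain ⟨C, hC, hFC⟩ := exists_norm_le_one_eq_comp_of_norm_adjoint_le F G fun x ↦ (hnorm x).le
  obtain ⟨D, hD, hGD⟩ := exists_norm_le_one_eq_comp_of_norm_adjoint_le G F fun x ↦ (hnorm x).ge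
  refine ⟨C, D, hC, hD, hFC, hGD, fun hF hG ↦ ⟨?_, ?_⟩⟩
  · exact eq_id_of_comp_eq_self hG (by rw [← comp_assoc, ← hFC, ← hGD])
  · exact eq_id_of_comp_eq_self hF (by rw [← comp_assoc, ← hGD, ← hFC])
end

section
/- With U_∨ : H(k₁+k₂) → H(k₁) ⊕ H(k₂) defined on kernel elements by U_∨ (k₁+k₂)_x = (k₁)_x ⊕ (k₂)_x, and U_∧ : H(k₁)∧H(k₂) → H(k₁) ⊕ H(k₂) defined by U_∧ h = h ⊕ (−h), both maps are isometries and H(k₁) ⊕ H(k₂) decomposes as the orthogonal direct sum of the ranges of U_∨ and U_∧. -/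
open scoped InnerProductSpace
open Finsupp

/-! The kernel sections `k₀ x` span a dense subspace of `H₀` (a vector orthogonal to all of them
has `j₀`-image zero), and `x ↦ (k₁ x, k₂ x)` has the same Gram matrix `k₁ + k₂`, so
`k₀ x ↦ (k₁ x, k₂ x)` extends from finite combinations to an isometry `U_∨`. A pair `q` is
orthogonal to `range U_∨` iff it is orthogonal to every `(k₁ x, k₂ x)`, and by the reproducing
property that inner product is `(j₁ q.1 + j₂ q.2) x`. -/

section

variable {𝕜 X E F : Type*} [RCLike 𝕜]
  [NormedAddCommGroup E] [InnerProductSpace 𝕜 E] [NormedAddCommGroup F] [InnerProductSpace 𝕜 F]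

theorem inner_linearCombination_eq_of_inner_eq {v : X → E} {w : X → F}
    (hvw : ∀ x y, ⟪v x, v y⟫_𝕜 = ⟪w x, w y⟫_𝕜) (c c' : X →₀ 𝕜) :
    ⟪linearCombination 𝕜 v c, linearCombination 𝕜 v c'⟫_𝕜 =
      ⟪linearCombination 𝕜 w c, linearCombination 𝕜 w c'⟫_𝕜 := by
  simp only [linearCombination_apply, Finsupp.sum_inner, Finsupp.inner_sum, inner_smul_left,
    inner_smul_right, hvw]

theorem norm_linearCombination_eq_of_inner_eq {v : X → E} {w : X → F}
    (hvw : ∀ x y, ⟪v x, v y⟫_𝕜 = ⟪w x, w y⟫_𝕜) (c : X →₀ 𝕜) :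
    ‖linearCombination 𝕜 w c‖ = ‖linearCombination 𝕜 v c‖ := by
  rw [norm_eq_sqrt_re_inner (𝕜 := 𝕜), norm_eq_sqrt_re_inner (𝕜 := 𝕜),
    inner_linearCombination_eq_of_inner_eq hvw]

theorem denseRange_linearCombination_of_forall_inner_eq_zero [CompleteSpace E] {v : X → E}
    (hv : ∀ f : E, (∀ x, ⟪v x, f⟫_𝕜 = 0) → f = 0) : DenseRange (linearCombination 𝕜 v) := by
  rw [DenseRange, ← LinearMap.coe_range, range_linearCombination,
    Submodule.dense_iff_topologicalClosure_eq_top, Submodule.topologicalClosure_eq_top_iff,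
    Submodule.eq_bot_iff]
  exact fun f hf => hv f fun x =>
    Submodule.inner_right_of_mem_orthogonal (Submodule.subset_span (Set.mem_range_self x)) hf

theorem exists_linearIsometry_apply_eq_of_inner_eq [CompleteSpace E] [CompleteSpace F]
    {v : X → E} {w : X → F} (hv : ∀ f : E, (∀ x, ⟪v x, f⟫_𝕜 = 0) → f = 0)
    (hvw : ∀ x y, ⟪v x, v y⟫_𝕜 = ⟪w x, w y⟫_𝕜) :
    ∃ U : E →ₗᵢ[𝕜] F, ∀ x, U (v x) = w x := by
  have hdense := denseRange_linearCombination_of_forall_inner_eq_zero hv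
  have hnorm := norm_linearCombination_eq_of_inner_eq hvw
  have hU := LinearMap.extendOfNorm_eq (f := linearCombination 𝕜 w) hdense
    ⟨1, fun c => by rw [hnorm, one_mul]⟩
  refine ⟨⟨(linearCombination 𝕜 w).extendOfNorm (linearCombination 𝕜 v), fun f => ?_⟩,
    fun x => ?_⟩
  · refine hdense.induction_on f (isClosed_eq (by fun_prop) continuous_norm) fun c => ?_
    simp [hU, hnorm]
  · simpa using hU (single x 1)

theorem LinearIsometry.mem_orthogonal_range_iff_forall_inner_apply_eq_zero [CompleteSpace E]
    [CompleteSpace F] {v : X → E} (hv : ∀ f : E, (∀ x, ⟪v x, f⟫_𝕜 = 0) → f = 0)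
    (U : E →ₗᵢ[𝕜] F) (q : F) :
    q ∈ (LinearMap.range U.toLinearMap)ᗮ ↔ ∀ x, ⟪U (v x), q⟫_𝕜 = 0 := by
  change q ∈ U.toContinuousLinearMap.rangeᗮ ↔ _
  rw [U.toContinuousLinearMap.orthogonal_range, LinearMap.mem_ker, ContinuousLinearMap.coe_coe]
  simp_rw [← LinearIsometry.coe_toContinuousLinearMap, ← ContinuousLinearMap.adjoint_inner_right]
  exact ⟨fun h x => by rw [h, inner_zero_right], hv _⟩

theorem eq_zero_of_forall_inner_reproducingKernel_eq_zero {j : E →ₗ[𝕜] (X → 𝕜)}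
    (hj : Function.Injective j) {k : X → E} (hk : ∀ f x, j f x = ⟪k x, f⟫_𝕜) (f : E)
    (hf : ∀ x, ⟪k x, f⟫_𝕜 = 0) : f = 0 :=
  hj (by ext x; simp [hk, hf])

end

theorem WithLp.prod_norm_neg_snd {E F : Type*} [SeminormedAddCommGroup E]
    [SeminormedAddCommGroup F] (p : WithLp 2 (E × F)) :
    ‖(WithLp.equiv 2 (E × F)).symm ((WithLp.equiv 2 (E × F) p).1, -(WithLp.equiv 2 (E × F) p).2)‖ =
      ‖p‖ := by
  simp [WithLp.prod_norm_eq_of_L2]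

theorem rkhs_join_meet_orthogonal_decomposition_general
    {X H₁ H₂ H₀ : Type*}
    [NormedAddCommGroup H₁] [InnerProductSpace ℂ H₁] [CompleteSpace H₁]
    [NormedAddCommGroup H₂] [InnerProductSpace ℂ H₂] [CompleteSpace H₂]
    [NormedAddCommGroup H₀] [InnerProductSpace ℂ H₀] [CompleteSpace H₀]
    (j₁ : H₁ →ₗ[ℂ] (X → ℂ)) (j₂ : H₂ →ₗ[ℂ] (X → ℂ)) (j₀ : H₀ →ₗ[ℂ] (X → ℂ))
    (hj₀ : Function.Injective j₀)
    (k₁ : X → H₁) (k₂ : X → H₂) (k₀ : X → H₀)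
    (hk₁ : ∀ (f : H₁) (x : X), j₁ f x = ⟪k₁ x, f⟫_ℂ)
    (hk₂ : ∀ (g : H₂) (x : X), j₂ g x = ⟪k₂ x, g⟫_ℂ)
    (hk₀ : ∀ (f : H₀) (x : X), j₀ f x = ⟪k₀ x, f⟫_ℂ)
    (hsum : ∀ x y : X, ⟪k₀ x, k₀ y⟫_ℂ = ⟪k₁ x, k₁ y⟫_ℂ + ⟪k₂ x, k₂ y⟫_ℂ) :
    (∃ Uvee : H₀ →ₗᵢ[ℂ] WithLp 2 (H₁ × H₂),
      (∀ x : X, Uvee (k₀ x) = (WithLp.equiv 2 (H₁ × H₂)).symm (k₁ x, k₂ x)) ∧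
      ∀ q : WithLp 2 (H₁ × H₂),
        q ∈ (LinearMap.range Uvee.toLinearMap)ᗮ ↔
          j₁ (WithLp.equiv 2 (H₁ × H₂) q).1 = - j₂ (WithLp.equiv 2 (H₁ × H₂) q).2) ∧
    ∀ p : WithLp 2 (H₁ × H₂),
      ‖(WithLp.equiv 2 (H₁ × H₂)).symm
        ((WithLp.equiv 2 (H₁ × H₂) p).1, -(WithLp.equiv 2 (H₁ × H₂) p).2)‖ = ‖p‖ := by
  set κ : X → WithLp 2 (H₁ × H₂) := fun x => (WithLp.equiv 2 (H₁ × H₂)).symm (k₁ x, k₂ x)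
  have hk₀_total := eq_zero_of_forall_inner_reproducingKernel_eq_zero hj₀ hk₀
  have hκ_gram : ∀ x y, ⟪k₀ x, k₀ y⟫_ℂ = ⟪κ x, κ y⟫_ℂ := fun x y => by
    simp [κ, hsum]
  have hκ_inner : ∀ x q, ⟪κ x, q⟫_ℂ = j₁ q.fst x + j₂ q.snd x := fun x q => by
    simp [κ, hk₁, hk₂]
  obtain ⟨U, hU⟩ := exists_linearIsometry_apply_eq_of_inner_eq hk₀_total hκ_gram
  refine ⟨⟨U, hU, fun q => ?_⟩, WithLp.prod_norm_neg_snd⟩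
  simp only [U.mem_orthogonal_range_iff_forall_inner_apply_eq_zero hk₀_total, hU, hκ_inner,
    funext_iff, eq_neg_iff_add_eq_zero]
  rfl

/-- Let `H(k₁)`, `H(k₂)` be RKHSs of functions on a set `X` (realized by
injective function-realization maps `j₁, j₂` and kernel maps `k₁, k₂`), and let `H(k₁ + k₂)` be
the RKHS of the sum kernel (realized as a Hilbert space `H₀` with injective `j₀` and kernel map
`k₀` whose Gram matrix is the sum of those of `k₁` and `k₂`).  Then the map `U_∨` sending kernel
elements `(k₁+k₂)_x ↦ (k₁)_x ⊕ (k₂)_x` extends to a linear isometry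
`U_∨ : H(k₁+k₂) → H(k₁) ⊕₂ H(k₂)`; the "flip" map `U_∧ : h ↦ h ⊕ (−h)` (i.e. `(f,g) ↦ (f,−g)` on
pairs) is an isometry; and `H(k₁) ⊕₂ H(k₂)` is the orthogonal direct sum of the ranges of `U_∨`
and `U_∧`: the orthogonal complement of `range U_∨` is exactly the set of pairs `q` with
`j₁ q.1 = − j₂ q.2`, which is the range of `U_∧` on the intersection space. -/
theorem rkhs_join_meet_orthogonal_decomposition
    {X H₁ H₂ H₀ : Type*}
    [NormedAddCommGroup H₁] [InnerProductSpace ℂ H₁] [CompleteSpace H₁]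
    [NormedAddCommGroup H₂] [InnerProductSpace ℂ H₂] [CompleteSpace H₂]
    [NormedAddCommGroup H₀] [InnerProductSpace ℂ H₀] [CompleteSpace H₀]
    (j₁ : H₁ →ₗ[ℂ] (X → ℂ)) (j₂ : H₂ →ₗ[ℂ] (X → ℂ)) (j₀ : H₀ →ₗ[ℂ] (X → ℂ))
    (hj₁ : Function.Injective j₁) (hj₂ : Function.Injective j₂)
    (hj₀ : Function.Injective j₀)
    (k₁ : X → H₁) (k₂ : X → H₂) (k₀ : X → H₀)
    (hk₁ : ∀ (f : H₁) (x : X), j₁ f x = ⟪k₁ x, f⟫_ℂ)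
    (hk₂ : ∀ (g : H₂) (x : X), j₂ g x = ⟪k₂ x, g⟫_ℂ)
    (hk₀ : ∀ (f : H₀) (x : X), j₀ f x = ⟪k₀ x, f⟫_ℂ)
    (hsum : ∀ x y : X, ⟪k₀ x, k₀ y⟫_ℂ = ⟪k₁ x, k₁ y⟫_ℂ + ⟪k₂ x, k₂ y⟫_ℂ) :
    (∃ Uvee : H₀ →ₗᵢ[ℂ] WithLp 2 (H₁ × H₂),
      (∀ x : X, Uvee (k₀ x) = (WithLp.equiv 2 (H₁ × H₂)).symm (k₁ x, k₂ x)) ∧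
      ∀ q : WithLp 2 (H₁ × H₂),
        q ∈ (LinearMap.range Uvee.toLinearMap)ᗮ ↔
          j₁ (WithLp.equiv 2 (H₁ × H₂) q).1 = - j₂ (WithLp.equiv 2 (H₁ × H₂) q).2) ∧
    ∀ p : WithLp 2 (H₁ × H₂),
      ‖(WithLp.equiv 2 (H₁ × H₂)).symm
        ((WithLp.equiv 2 (H₁ × H₂) p).1, -(WithLp.equiv 2 (H₁ × H₂) p).2)‖ = ‖p‖ :=
  rkhs_join_meet_orthogonal_decomposition_general j₁ j₂ j₀ hj₀ k₁ k₂ k₀ hk₁ hk₂ hk₀ hsum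
end

section
/- The kernel element of the intersection space satisfies (k₁ ∧ k₂)_x = (1/2) U_∧* ((k₁)_x ⊕ −(k₂)_x) = U_∧* ((k₁)_x ⊕ 0) = U_∧* (0 ⊕ −(k₂)_x), where U_∧ h = h ⊕ (−h) is the isometric embedding of H(k₁)∧H(k₂) into H(k₁) ⊕ H(k₂). -/
open scoped InnerProductSpace

/-! For `p = (f, g)` in the intersection, `j₁ f = j₂ g`; evaluating at `x` with the reproducing
property gives `⟪k₁ x, f⟫ = ⟪k₂ x, g⟫`. Hence `⟪(a, b), (f, -g)⟫ = ⟪a, f⟫ - ⟪b, g⟫` takes the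
value `⟪k₁ x, f⟫ = ⟪K, p⟫` for `(a, b) = (k₁ x, 0)` and `(0, -k₂ x)`, and twice it for
`(k₁ x, -k₂ x)`. -/

/-- The intersection space `H(k₁) ∧ H(k₂)`, realized as the subspace of the Hilbert direct sum
`H₁ ⊕₂ H₂` consisting of pairs `(f, g)` representing the same function, i.e. `j₁ f = j₂ g`.
Its inherited norm is the sum-of-squares norm `‖f‖² + ‖g‖²`. -/
noncomputable def interSub {X H₁ H₂ : Type*}
    [NormedAddCommGroup H₁] [InnerProductSpace ℂ H₁]
    [NormedAddCommGroup H₂] [InnerProductSpace ℂ H₂]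
    (j₁ : H₁ →ₗ[ℂ] (X → ℂ)) (j₂ : H₂ →ₗ[ℂ] (X → ℂ)) :
    Submodule ℂ (WithLp 2 (H₁ × H₂)) :=
  LinearMap.ker ((j₁.comp (LinearMap.fst ℂ H₁ H₂) - j₂.comp (LinearMap.snd ℂ H₁ H₂)).comp
    (WithLp.linearEquiv 2 ℂ (H₁ × H₂)).toLinearMap)

section

variable {X H₁ H₂ : Type*} [NormedAddCommGroup H₁] [InnerProductSpace ℂ H₁]
  [NormedAddCommGroup H₂] [InnerProductSpace ℂ H₂]
  {j₁ : H₁ →ₗ[ℂ] (X → ℂ)} {j₂ : H₂ →ₗ[ℂ] (X → ℂ)}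

theorem mem_interSub {p : WithLp 2 (H₁ × H₂)} :
    p ∈ interSub j₁ j₂ ↔ j₁ (WithLp.equiv 2 (H₁ × H₂) p).1 = j₂ (WithLp.equiv 2 (H₁ × H₂) p).2 := by
  simp [interSub, sub_eq_zero, WithLp.linearEquiv]

theorem inner_kernel_fst_eq_inner_kernel_snd_of_mem_interSub {k₁ : X → H₁} {k₂ : X → H₂}
    (hk₁ : ∀ (f : H₁) (x : X), j₁ f x = ⟪k₁ x, f⟫_ℂ)
    (hk₂ : ∀ (g : H₂) (x : X), j₂ g x = ⟪k₂ x, g⟫_ℂ)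
    {p : WithLp 2 (H₁ × H₂)} (hp : p ∈ interSub j₁ j₂) (x : X) :
    ⟪k₁ x, (WithLp.equiv 2 (H₁ × H₂) p).1⟫_ℂ = ⟪k₂ x, (WithLp.equiv 2 (H₁ × H₂) p).2⟫_ℂ := by
  rw [← hk₁, ← hk₂, mem_interSub.mp hp]

end

theorem rkhs_meet_kernel_element_formulas_general
    {X H₁ H₂ : Type*}
    [NormedAddCommGroup H₁] [InnerProductSpace ℂ H₁]
    [NormedAddCommGroup H₂] [InnerProductSpace ℂ H₂]
    (j₁ : H₁ →ₗ[ℂ] (X → ℂ)) (j₂ : H₂ →ₗ[ℂ] (X → ℂ))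
    (k₁ : X → H₁) (k₂ : X → H₂)
    (hk₁ : ∀ (f : H₁) (x : X), j₁ f x = ⟪k₁ x, f⟫_ℂ)
    (hk₂ : ∀ (g : H₂) (x : X), j₂ g x = ⟪k₂ x, g⟫_ℂ)
    (x : X) (K : interSub j₁ j₂)
    (hK : ∀ p : interSub j₁ j₂,
      ⟪K, p⟫_ℂ = j₁ (WithLp.equiv 2 (H₁ × H₂) (p : WithLp 2 (H₁ × H₂))).1 x) :
    ∀ p : interSub j₁ j₂,
      ⟪K, p⟫_ℂ = (1 / 2 : ℂ) *
          ⟪(WithLp.equiv 2 (H₁ × H₂)).symm (k₁ x, -(k₂ x)),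
            (WithLp.equiv 2 (H₁ × H₂)).symm
              ((WithLp.equiv 2 (H₁ × H₂) (p : WithLp 2 (H₁ × H₂))).1,
               -(WithLp.equiv 2 (H₁ × H₂) (p : WithLp 2 (H₁ × H₂))).2)⟫_ℂ ∧
      ⟪K, p⟫_ℂ =
          ⟪(WithLp.equiv 2 (H₁ × H₂)).symm (k₁ x, (0 : H₂)),
            (WithLp.equiv 2 (H₁ × H₂)).symm
              ((WithLp.equiv 2 (H₁ × H₂) (p : WithLp 2 (H₁ × H₂))).1,
               -(WithLp.equiv 2 (H₁ × H₂) (p : WithLp 2 (H₁ × H₂))).2)⟫_ℂ ∧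
      ⟪K, p⟫_ℂ =
          ⟪(WithLp.equiv 2 (H₁ × H₂)).symm ((0 : H₁), -(k₂ x)),
            (WithLp.equiv 2 (H₁ × H₂)).symm
              ((WithLp.equiv 2 (H₁ × H₂) (p : WithLp 2 (H₁ × H₂))).1,
               -(WithLp.equiv 2 (H₁ × H₂) (p : WithLp 2 (H₁ × H₂))).2)⟫_ℂ := by
  intro p
  have hK_eq : ⟪K, p⟫_ℂ = ⟪k₁ x, (WithLp.equiv 2 (H₁ × H₂) (p : WithLp 2 (H₁ × H₂))).1⟫_ℂ := by
    rw [hK p, hk₁]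
  have h_same := inner_kernel_fst_eq_inner_kernel_snd_of_mem_interSub hk₁ hk₂ p.2 x
  refine ⟨?_, ?_, ?_⟩ <;>
    simp only [hK_eq, WithLp.prod_inner_apply, WithLp.equiv_symm_apply, inner_neg_neg,
      inner_zero_left, add_zero, zero_add, ← h_same]
  ring

/-- The kernel element of the intersection space satisfies
`(k₁ ∧ k₂)_x = (1/2) U_∧* ((k₁)_x ⊕ −(k₂)_x) = U_∧* ((k₁)_x ⊕ 0) = U_∧* (0 ⊕ −(k₂)_x)`, where
`U_∧ h = h ⊕ (−h)` (i.e. `(f,g) ↦ (f,−g)` on pairs) is the isometric embedding of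
`H(k₁) ∧ H(k₂)` into `H(k₁) ⊕₂ H(k₂)`.  Identities for the adjoint `U_∧*` are expressed via
inner products: for every `w`, `⟪U_∧* w, p⟫ = ⟪w, U_∧ p⟫`. -/
theorem rkhs_meet_kernel_element_formulas
    {X H₁ H₂ : Type*}
    [NormedAddCommGroup H₁] [InnerProductSpace ℂ H₁] [CompleteSpace H₁]
    [NormedAddCommGroup H₂] [InnerProductSpace ℂ H₂] [CompleteSpace H₂]
    (j₁ : H₁ →ₗ[ℂ] (X → ℂ)) (j₂ : H₂ →ₗ[ℂ] (X → ℂ))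
    (hj₁ : Function.Injective j₁) (hj₂ : Function.Injective j₂)
    (k₁ : X → H₁) (k₂ : X → H₂)
    (hk₁ : ∀ (f : H₁) (x : X), j₁ f x = ⟪k₁ x, f⟫_ℂ)
    (hk₂ : ∀ (g : H₂) (x : X), j₂ g x = ⟪k₂ x, g⟫_ℂ)
    (x : X) (K : interSub j₁ j₂)
    (hK : ∀ p : interSub j₁ j₂,
      ⟪K, p⟫_ℂ = j₁ (WithLp.equiv 2 (H₁ × H₂) (p : WithLp 2 (H₁ × H₂))).1 x) :
    ∀ p : interSub j₁ j₂,
      ⟪K, p⟫_ℂ = (1 / 2 : ℂ) *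
          ⟪(WithLp.equiv 2 (H₁ × H₂)).symm (k₁ x, -(k₂ x)),
            (WithLp.equiv 2 (H₁ × H₂)).symm
              ((WithLp.equiv 2 (H₁ × H₂) (p : WithLp 2 (H₁ × H₂))).1,
               -(WithLp.equiv 2 (H₁ × H₂) (p : WithLp 2 (H₁ × H₂))).2)⟫_ℂ ∧
      ⟪K, p⟫_ℂ =
          ⟪(WithLp.equiv 2 (H₁ × H₂)).symm (k₁ x, (0 : H₂)),
            (WithLp.equiv 2 (H₁ × H₂)).symm
              ((WithLp.equiv 2 (H₁ × H₂) (p : WithLp 2 (H₁ × H₂))).1,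
               -(WithLp.equiv 2 (H₁ × H₂) (p : WithLp 2 (H₁ × H₂))).2)⟫_ℂ ∧
      ⟪K, p⟫_ℂ =
          ⟪(WithLp.equiv 2 (H₁ × H₂)).symm ((0 : H₁), -(k₂ x)),
            (WithLp.equiv 2 (H₁ × H₂)).symm
              ((WithLp.equiv 2 (H₁ × H₂) (p : WithLp 2 (H₁ × H₂))).1,
               -(WithLp.equiv 2 (H₁ × H₂) (p : WithLp 2 (H₁ × H₂))).2)⟫_ℂ :=
  rkhs_meet_kernel_element_formulas_general j₁ j₂ k₁ k₂ hk₁ hk₂ x K hK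
end

section
/- Let e₁ : M₁ → H and e₂ : M₂ → H be bounded injective linear maps between Hilbert spaces, and define N = range e₁ ∩ range e₂ with norm ‖ζ‖²_N = ‖e₁⁻¹ζ‖²_{M₁} + ‖e₂⁻¹ζ‖²_{M₂}. Then N is complete (a Hilbert space), and the maps f₁(ζ) = e₁⁻¹ζ and f₂(ζ) = e₂⁻¹ζ are contractive injective linear maps from N to M₁ and M₂ respectively. -/
theorem intersection_space_complete_and_contractive_general
    {M₁ M₂ H : Type*}
    [NormedAddCommGroup M₁] [InnerProductSpace ℂ M₁]
    [NormedAddCommGroup M₂] [InnerProductSpace ℂ M₂]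
    [NormedAddCommGroup H] [InnerProductSpace ℂ H]
    (e₁ : M₁ →L[ℂ] H) (e₂ : M₂ →L[ℂ] H)
    (h₁ : Function.Injective e₁) (h₂ : Function.Injective e₂) :
    IsClosed {p : WithLp 2 (M₁ × M₂) |
        e₁ (WithLp.equiv 2 (M₁ × M₂) p).1 = e₂ (WithLp.equiv 2 (M₁ × M₂) p).2} ∧
    (∀ p : WithLp 2 (M₁ × M₂),
      ‖(WithLp.equiv 2 (M₁ × M₂) p).1‖ ≤ ‖p‖ ∧ ‖(WithLp.equiv 2 (M₁ × M₂) p).2‖ ≤ ‖p‖) ∧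
    (∀ (ξ ξ' : M₁) (η η' : M₂), e₁ ξ = e₂ η → e₁ ξ' = e₂ η' → ξ = ξ' → η = η') ∧
    (∀ (ξ ξ' : M₁) (η η' : M₂), e₁ ξ = e₂ η → e₁ ξ' = e₂ η' → η = η' → ξ = ξ') := by
  refine ⟨isClosed_eq (by fun_prop) (by fun_prop),
    fun p => ⟨WithLp.norm_fst_le _ p, WithLp.norm_snd_le _ p⟩, ?_, ?_⟩
  · rintro ξ _ η η' hξη hξη' rfl
    exact h₂ (hξη.symm.trans hξη')
  · rintro ξ ξ' η _ hξη hξη' rfl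
    exact h₁ (hξη.trans hξη'.symm)

/-- Let `e₁ : M₁ → H`, `e₂ : M₂ → H` be bounded injective linear maps between
Hilbert spaces and let `N = range e₁ ∩ range e₂` carry the norm
`‖ζ‖²_N = ‖e₁⁻¹ ζ‖² + ‖e₂⁻¹ ζ‖²`.  Realizing `N` as the set of pairs `(ξ, η)` in the Hilbert
direct sum `M₁ ⊕₂ M₂` with `e₁ ξ = e₂ η` (whose inherited norm is exactly `‖ξ‖² + ‖η‖²`), `N` is
closed — hence complete, a Hilbert space — and the coordinate maps `f₁(ζ) = e₁⁻¹ζ`,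
`f₂(ζ) = e₂⁻¹ζ` are contractive and injective. -/
theorem intersection_space_complete_and_contractive
    {M₁ M₂ H : Type*}
    [NormedAddCommGroup M₁] [InnerProductSpace ℂ M₁] [CompleteSpace M₁]
    [NormedAddCommGroup M₂] [InnerProductSpace ℂ M₂] [CompleteSpace M₂]
    [NormedAddCommGroup H] [InnerProductSpace ℂ H] [CompleteSpace H]
    (e₁ : M₁ →L[ℂ] H) (e₂ : M₂ →L[ℂ] H)
    (h₁ : Function.Injective e₁) (h₂ : Function.Injective e₂) :
    IsClosed {p : WithLp 2 (M₁ × M₂) |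
        e₁ (WithLp.equiv 2 (M₁ × M₂) p).1 = e₂ (WithLp.equiv 2 (M₁ × M₂) p).2} ∧
    (∀ p : WithLp 2 (M₁ × M₂),
      ‖(WithLp.equiv 2 (M₁ × M₂) p).1‖ ≤ ‖p‖ ∧ ‖(WithLp.equiv 2 (M₁ × M₂) p).2‖ ≤ ‖p‖) ∧
    (∀ (ξ ξ' : M₁) (η η' : M₂), e₁ ξ = e₂ η → e₁ ξ' = e₂ η' → ξ = ξ' → η = η') ∧
    (∀ (ξ ξ' : M₁) (η η' : M₂), e₁ ξ = e₂ η → e₁ ξ' = e₂ η' → η = η' → ξ = ξ') :=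
  intersection_space_complete_and_contractive_general e₁ e₂ h₁ h₂
end

section
/- Let (M₁,e₁), (M₂,e₂) be objects as above (bounded injective maps into H), let e : M₁ ⊕ M₂ → H be e(ξ,η) = e₁ξ + e₂η, and set M₁ ∨ M₂ = (ker e)^⊥ with structure map e restricted. Then the maps ε_j = P_{(ker e)^⊥} ∘ ι_j (ι_j the canonical inclusions) satisfy e ∘ ε_j = e_j, are injective, and (M₁ ∨ M₂, e|_{(ker e)^⊥}) together with ε₁, ε₂ is a coproduct of (M₁,e₁) and (M₂,e₂) in the category: for any (N,f) with morphisms θ_j : (M_j,e_j) → (N,f) there is a unique morphism θ̃ : M₁ ∨ M₂ → N with θ̃ ∘ ε_j = θ_j. -/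
/-!
Since `(ker e)ᗮᗮ = ker e`, the projection `P` onto `(ker e)ᗮ` only changes vectors by elements of
`ker e`, so every linear map vanishing on `ker e` is unchanged by precomposition with `P`; for `e`
itself this gives `e ∘ ε_j = e_j`, and injectivity of `ε_j` follows from that of `e_j`. Given
`θ_j` into `(N, f)`, the map `g(ξ, η) = θ₁ ξ + θ₂ η` satisfies `f ∘ g = e`, so `ker g = ker e`
because `f` is injective. Hence `g` restricted to `(ker e)ᗮ` is injective, lies over `e`, and
satisfies `g ∘ ε_j = g ∘ ι_j = θ_j`; it is unique because `f` is injective.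
-/

universe u

open Submodule

section OrthogonalKernel

variable {𝕜 E F : Type*} [RCLike 𝕜] [NormedAddCommGroup E] [InnerProductSpace 𝕜 E]
  [AddCommGroup F] [Module 𝕜 F]

theorem LinearMap.apply_orthogonalProjectionOnto_orthogonal_of_le_ker {U : Submodule 𝕜 E}
    [U.HasOrthogonalProjection] {g : E →ₗ[𝕜] F} (hg : U ≤ LinearMap.ker g) (v : E) :
    g (Uᗮ.orthogonalProjectionOnto v) = g v := by
  rw [orthogonalProjectionOnto_orthogonal, Submodule.coe_mk, map_sub,
    LinearMap.mem_ker.1 (hg (U.starProjection_apply_mem v)), sub_zero]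

theorem LinearMap.injective_domRestrict_orthogonal_ker (g : E →ₗ[𝕜] F) :
    Function.Injective (g.domRestrict (LinearMap.ker g)ᗮ) :=
  LinearMap.injective_domRestrict_iff.2 (LinearMap.ker g).orthogonal_disjoint.symm

end OrthogonalKernel

section Factorization

variable {𝕜 E N H : Type*} [RCLike 𝕜] [NormedAddCommGroup E] [InnerProductSpace 𝕜 E]
  [AddCommGroup N] [Module 𝕜 N] [TopologicalSpace N]
  [AddCommGroup H] [Module 𝕜 H] [TopologicalSpace H]
  {f : N →L[𝕜] H} {g : E →L[𝕜] N} {e : E →L[𝕜] H}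

theorem ContinuousLinearMap.injective_comp_subtypeL_orthogonal_ker (hfg : f.comp g = e) :
    Function.Injective (g.comp (LinearMap.ker e.toLinearMap)ᗮ.subtypeL) := by
  refine Function.Injective.of_comp (f := f) ?_
  convert e.toLinearMap.injective_domRestrict_orthogonal_ker using 1
  ext q
  exact congr($hfg q)

theorem ContinuousLinearMap.apply_orthogonalProjectionOnto_orthogonal_ker
    [(LinearMap.ker e.toLinearMap).HasOrthogonalProjection] (hf : Function.Injective f)
    (hfg : f.comp g = e) (v : E) :
    g ((LinearMap.ker e.toLinearMap)ᗮ.orthogonalProjectionOnto v) = g v := by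
  have hker : LinearMap.ker e.toLinearMap = LinearMap.ker g.toLinearMap := by
    rw [← hfg, ContinuousLinearMap.toLinearMap_comp,
      LinearMap.ker_comp_of_ker_eq_bot _ (LinearMap.ker_eq_bot.2 hf)]
  exact g.toLinearMap.apply_orthogonalProjectionOnto_orthogonal_of_le_ker hker.le v

end Factorization

theorem join_is_coproduct_general
    {H M₁ M₂ : Type*}
    [NormedAddCommGroup H] [InnerProductSpace ℂ H]
    [NormedAddCommGroup M₁] [InnerProductSpace ℂ M₁]
    [NormedAddCommGroup M₂] [InnerProductSpace ℂ M₂]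
    (e₁ : M₁ →L[ℂ] H) (e₂ : M₂ →L[ℂ] H)
    (h₁ : Function.Injective e₁) (h₂ : Function.Injective e₂)
    (e : WithLp 2 (M₁ × M₂) →L[ℂ] H)
    (he : ∀ p, e p = e₁ (WithLp.equiv 2 (M₁ × M₂) p).1 + e₂ (WithLp.equiv 2 (M₁ × M₂) p).2)
    [Submodule.HasOrthogonalProjection (LinearMap.ker e.toLinearMap)] :
    (∀ ξ : M₁, e ((Submodule.orthogonalProjectionOnto (LinearMap.ker e.toLinearMap)ᗮ
        ((WithLp.equiv 2 (M₁ × M₂)).symm (ξ, 0)) : (LinearMap.ker e.toLinearMap)ᗮ) : WithLp 2 (M₁ × M₂)) =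
        e₁ ξ) ∧
    (∀ η : M₂, e ((Submodule.orthogonalProjectionOnto (LinearMap.ker e.toLinearMap)ᗮ
        ((WithLp.equiv 2 (M₁ × M₂)).symm (0, η)) : (LinearMap.ker e.toLinearMap)ᗮ) : WithLp 2 (M₁ × M₂)) =
        e₂ η) ∧
    Function.Injective (fun ξ : M₁ => Submodule.orthogonalProjectionOnto (LinearMap.ker e.toLinearMap)ᗮ
        ((WithLp.equiv 2 (M₁ × M₂)).symm (ξ, 0))) ∧
    Function.Injective (fun η : M₂ => Submodule.orthogonalProjectionOnto (LinearMap.ker e.toLinearMap)ᗮ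
        ((WithLp.equiv 2 (M₁ × M₂)).symm (0, η))) ∧
    (∀ (N : Type u) (_ : NormedAddCommGroup N), ∀ (_ : InnerProductSpace ℂ N)
        (_ : CompleteSpace N) (f : N →L[ℂ] H), Function.Injective f →
      ∀ (θ₁ : M₁ →L[ℂ] N) (θ₂ : M₂ →L[ℂ] N),
        Function.Injective θ₁ → Function.Injective θ₂ →
        f.comp θ₁ = e₁ → f.comp θ₂ = e₂ →
        ∃! θ : ↥((LinearMap.ker e.toLinearMap)ᗮ) →L[ℂ] N,
          Function.Injective θ ∧
          (∀ q : ↥((LinearMap.ker e.toLinearMap)ᗮ), f (θ q) = e (q : WithLp 2 (M₁ × M₂))) ∧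
          (∀ ξ : M₁, θ (Submodule.orthogonalProjectionOnto (LinearMap.ker e.toLinearMap)ᗮ
              ((WithLp.equiv 2 (M₁ × M₂)).symm (ξ, 0))) = θ₁ ξ) ∧
          (∀ η : M₂, θ (Submodule.orthogonalProjectionOnto (LinearMap.ker e.toLinearMap)ᗮ
              ((WithLp.equiv 2 (M₁ × M₂)).symm (0, η))) = θ₂ η)) := by
  set K := (LinearMap.ker e.toLinearMap)ᗮ
  have hP : ∀ v, e (K.orthogonalProjectionOnto v) = e v :=
    e.toLinearMap.apply_orthogonalProjectionOnto_orthogonal_of_le_ker le_rfl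
  have hε₁ : ∀ ξ : M₁, e (K.orthogonalProjectionOnto ((WithLp.equiv 2 (M₁ × M₂)).symm (ξ, 0))) =
      e₁ ξ := fun ξ => by rw [hP]; simp [he]
  have hε₂ : ∀ η : M₂, e (K.orthogonalProjectionOnto ((WithLp.equiv 2 (M₁ × M₂)).symm (0, η))) =
      e₂ η := fun η => by rw [hP]; simp [he]
  refine ⟨hε₁, hε₂, fun ξ ξ' h => h₁ ?_, fun η η' h => h₂ ?_, ?_⟩
  · exact (hε₁ ξ).symm.trans ((congrArg (fun q : K => e q) h).trans (hε₁ ξ'))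
  · exact (hε₂ η).symm.trans ((congrArg (fun q : K => e q) h).trans (hε₂ η'))
  intro N _ _ _ f hf θ₁ θ₂ _ _ hfθ₁ hfθ₂
  let g : WithLp 2 (M₁ × M₂) →L[ℂ] N :=
    (θ₁.coprod θ₂).comp (WithLp.prodContinuousLinearEquiv 2 ℂ M₁ M₂).toContinuousLinearMap
  have hfg : f.comp g = e := by
    ext p
    simp [g, he, ← hfθ₁, ← hfθ₂]
  have hgP : ∀ v, g (K.orthogonalProjectionOnto v) = g v :=
    ContinuousLinearMap.apply_orthogonalProjectionOnto_orthogonal_ker hf hfg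
  refine ⟨g.comp K.subtypeL, ⟨ContinuousLinearMap.injective_comp_subtypeL_orthogonal_ker hfg,
    fun q => congr($hfg q),
    fun ξ => (hgP _).trans (by simp [g]), fun η => (hgP _).trans (by simp [g])⟩, ?_⟩
  rintro θ ⟨-, hθ, -, -⟩
  ext q
  exact hf ((hθ q).trans congr($hfg q).symm)

/-- In the slice category of pairs `(M, e)` of a Hilbert space with a bounded
injective linear map into a fixed Hilbert space `H` (morphisms: bounded injective maps
intertwining structure maps), the join `(M₁ ∨ M₂, e|)` — the orthogonal complement of the kernel
of `e : M₁ ⊕₂ M₂ → H`, `e(ξ,η) = e₁ ξ + e₂ η`, with the restricted structure map — together with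
the maps `ε_j = P_{(ker e)ᗮ} ∘ ι_j`, is a coproduct: the `ε_j` satisfy `e ∘ ε_j = e_j`, are
injective, and for any object `(N, f)` with morphisms `θ_j : (M_j, e_j) → (N, f)` there is a
unique morphism `θ̃ : M₁ ∨ M₂ → N` with `θ̃ ∘ ε_j = θ_j`. -/
theorem join_is_coproduct
    {H M₁ M₂ : Type*}
    [NormedAddCommGroup H] [InnerProductSpace ℂ H] [CompleteSpace H]
    [NormedAddCommGroup M₁] [InnerProductSpace ℂ M₁] [CompleteSpace M₁]
    [NormedAddCommGroup M₂] [InnerProductSpace ℂ M₂] [CompleteSpace M₂]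
    (e₁ : M₁ →L[ℂ] H) (e₂ : M₂ →L[ℂ] H)
    (h₁ : Function.Injective e₁) (h₂ : Function.Injective e₂)
    (e : WithLp 2 (M₁ × M₂) →L[ℂ] H)
    (he : ∀ p, e p = e₁ (WithLp.equiv 2 (M₁ × M₂) p).1 + e₂ (WithLp.equiv 2 (M₁ × M₂) p).2)
    [Submodule.HasOrthogonalProjection (LinearMap.ker e.toLinearMap)] :
    (∀ ξ : M₁, e ((Submodule.orthogonalProjectionOnto (LinearMap.ker e.toLinearMap)ᗮ
        ((WithLp.equiv 2 (M₁ × M₂)).symm (ξ, 0)) : (LinearMap.ker e.toLinearMap)ᗮ) : WithLp 2 (M₁ × M₂)) =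
        e₁ ξ) ∧
    (∀ η : M₂, e ((Submodule.orthogonalProjectionOnto (LinearMap.ker e.toLinearMap)ᗮ
        ((WithLp.equiv 2 (M₁ × M₂)).symm (0, η)) : (LinearMap.ker e.toLinearMap)ᗮ) : WithLp 2 (M₁ × M₂)) =
        e₂ η) ∧
    Function.Injective (fun ξ : M₁ => Submodule.orthogonalProjectionOnto (LinearMap.ker e.toLinearMap)ᗮ
        ((WithLp.equiv 2 (M₁ × M₂)).symm (ξ, 0))) ∧
    Function.Injective (fun η : M₂ => Submodule.orthogonalProjectionOnto (LinearMap.ker e.toLinearMap)ᗮ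
        ((WithLp.equiv 2 (M₁ × M₂)).symm (0, η))) ∧
    (∀ (N : Type u) (_ : NormedAddCommGroup N), ∀ (_ : InnerProductSpace ℂ N)
        (_ : CompleteSpace N) (f : N →L[ℂ] H), Function.Injective f →
      ∀ (θ₁ : M₁ →L[ℂ] N) (θ₂ : M₂ →L[ℂ] N),
        Function.Injective θ₁ → Function.Injective θ₂ →
        f.comp θ₁ = e₁ → f.comp θ₂ = e₂ →
        ∃! θ : ↥((LinearMap.ker e.toLinearMap)ᗮ) →L[ℂ] N,
          Function.Injective θ ∧
          (∀ q : ↥((LinearMap.ker e.toLinearMap)ᗮ), f (θ q) = e (q : WithLp 2 (M₁ × M₂))) ∧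
          (∀ ξ : M₁, θ (Submodule.orthogonalProjectionOnto (LinearMap.ker e.toLinearMap)ᗮ
              ((WithLp.equiv 2 (M₁ × M₂)).symm (ξ, 0))) = θ₁ ξ) ∧
          (∀ η : M₂, θ (Submodule.orthogonalProjectionOnto (LinearMap.ker e.toLinearMap)ᗮ
              ((WithLp.equiv 2 (M₁ × M₂)).symm (0, η))) = θ₂ η)) :=
  join_is_coproduct_general e₁ e₂ h₁ h₂ e he
end

section
/- In the same category, (ker e, e₁ ∘ P_{M₁}|_{ker e}) where e(ξ,η) = e₁ξ + e₂η, is a product of (M₁,e₁) and (M₂,e₂): the projections f_j obtained by restricting the coordinate projections to ker e (with a sign on the second coordinate) are morphisms to (M_j,e_j), and for any object (N,g) with morphisms h_j : (N,g) → (M_j,e_j), the map h = (h₁, −h₂) takes values in ker e, is the unique morphism with f_j ∘ h = h_j, and satisfies e₁ P_{M₁} h = g. -/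
/-!
A point `(ξ, η)` of `ker e` satisfies `e₂ (-η) = e₁ ξ`, so injectivity of `e₂` recovers `η` from `ξ`
and injectivity of `e₁` recovers `ξ` from `-η`: each coordinate map is injective on `ker e`. Given
`e₁ ∘ h₁ = g = e₂ ∘ h₂`, the map `n ↦ (h₁ n, -h₂ n)` lands in `ker e`, and it is the only lift since
the first coordinate map is injective.
-/

section KernelOfSum

variable {R M₁ M₂ H F₁ F₂ : Type*} [Semiring R] [AddCommGroup M₁] [Module R M₁]
  [AddCommGroup M₂] [Module R M₂] [AddCommGroup H] [Module R H]
  [FunLike F₁ M₁ H] [FunLike F₂ M₂ H] [AddMonoidHomClass F₂ M₂ H]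
  {e₁ : F₁} {e₂ : F₂} {p : ENNReal} {e : WithLp p (M₁ × M₂) →ₗ[R] H}

theorem map_neg_snd_eq_map_fst_of_mem_ker
    (he : ∀ x, e x = e₁ (WithLp.equiv p (M₁ × M₂) x).1 + e₂ (WithLp.equiv p (M₁ × M₂) x).2)
    (x : LinearMap.ker e) :
    e₂ (-(WithLp.equiv p (M₁ × M₂) x).2) = e₁ (WithLp.equiv p (M₁ × M₂) x).1 := by
  have hx : e₁ (WithLp.equiv p (M₁ × M₂) x).1 + e₂ (WithLp.equiv p (M₁ × M₂) x).2 = 0 :=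
    (he x).symm.trans x.2
  rw [map_neg, neg_eq_iff_add_eq_zero, add_comm, hx]

theorem Submodule.withLp_prod_ext {K : Submodule R (WithLp p (M₁ × M₂))} {x y : K}
    (h₁ : (WithLp.equiv p (M₁ × M₂) x).1 = (WithLp.equiv p (M₁ × M₂) y).1)
    (h₂ : (WithLp.equiv p (M₁ × M₂) x).2 = (WithLp.equiv p (M₁ × M₂) y).2) : x = y :=
  Subtype.ext <| (WithLp.equiv p (M₁ × M₂)).injective (Prod.ext h₁ h₂)

theorem injective_fst_ker
    (he : ∀ x, e x = e₁ (WithLp.equiv p (M₁ × M₂) x).1 + e₂ (WithLp.equiv p (M₁ × M₂) x).2)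
    (h₂ : Function.Injective e₂) :
    Function.Injective fun x : LinearMap.ker e => (WithLp.equiv p (M₁ × M₂) x).1 := by
  intro x y (hxy : (WithLp.equiv p (M₁ × M₂) x).1 = (WithLp.equiv p (M₁ × M₂) y).1)
  refine Submodule.withLp_prod_ext hxy (neg_injective (h₂ ?_))
  rw [map_neg_snd_eq_map_fst_of_mem_ker he, map_neg_snd_eq_map_fst_of_mem_ker he, hxy]

theorem injective_neg_snd_ker
    (he : ∀ x, e x = e₁ (WithLp.equiv p (M₁ × M₂) x).1 + e₂ (WithLp.equiv p (M₁ × M₂) x).2)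
    (h₁ : Function.Injective e₁) :
    Function.Injective fun x : LinearMap.ker e => -(WithLp.equiv p (M₁ × M₂) x).2 := by
  intro x y (hxy : -(WithLp.equiv p (M₁ × M₂) x).2 = -(WithLp.equiv p (M₁ × M₂) y).2)
  refine Submodule.withLp_prod_ext (h₁ ?_) (neg_injective hxy)
  rw [← map_neg_snd_eq_map_fst_of_mem_ker he, ← map_neg_snd_eq_map_fst_of_mem_ker he]
  exact congrArg e₂ hxy

end KernelOfSum

section Lift

variable {R M₁ M₂ H N : Type*} [Ring R] [TopologicalSpace M₁] [AddCommGroup M₁] [Module R M₁]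
  [TopologicalSpace M₂] [AddCommGroup M₂] [Module R M₂] [IsTopologicalAddGroup M₂]
  [TopologicalSpace H] [AddCommGroup H] [Module R H]
  [TopologicalSpace N] [AddCommGroup N] [Module R N] {p : ENNReal}

theorem exists_lift_ker_of_comp_eq {e₁ : M₁ →L[R] H} {e₂ : M₂ →L[R] H}
    {e : WithLp p (M₁ × M₂) →L[R] H}
    (he : ∀ x, e x = e₁ (WithLp.equiv p (M₁ × M₂) x).1 + e₂ (WithLp.equiv p (M₁ × M₂) x).2)
    {g : N →L[R] H} {h₁ : N →L[R] M₁} {h₂ : N →L[R] M₂}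
    (hc₁ : e₁.comp h₁ = g) (hc₂ : e₂.comp h₂ = g) :
    ∃ h : N →L[R] LinearMap.ker (e : WithLp p (M₁ × M₂) →ₗ[R] H), ∀ n,
      (WithLp.equiv p (M₁ × M₂) (h n)).1 = h₁ n ∧ -(WithLp.equiv p (M₁ × M₂) (h n)).2 = h₂ n := by
  set T : N →L[R] WithLp p (M₁ × M₂) :=
    (WithLp.prodContinuousLinearEquiv p R M₁ M₂).symm.toContinuousLinearMap.comp (h₁.prod (-h₂))
  have hT : ∀ n, WithLp.equiv p (M₁ × M₂) (T n) = (h₁ n, -h₂ n) := fun _ => rfl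
  have hmem : ∀ n, T n ∈ LinearMap.ker (e : WithLp p (M₁ × M₂) →ₗ[R] H) := by
    intro n
    rw [LinearMap.mem_ker, ContinuousLinearMap.coe_coe, he, hT, map_neg,
      ← ContinuousLinearMap.comp_apply, ← ContinuousLinearMap.comp_apply, hc₁, hc₂, add_neg_cancel]
  exact ⟨T.codRestrict _ hmem, fun n => by simp [hT]⟩

end Lift

universe u

theorem meet_is_product_general
    {H M₁ M₂ : Type*}
    [NormedAddCommGroup H] [InnerProductSpace ℂ H]
    [NormedAddCommGroup M₁] [InnerProductSpace ℂ M₁]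
    [NormedAddCommGroup M₂] [InnerProductSpace ℂ M₂]
    (e₁ : M₁ →L[ℂ] H) (e₂ : M₂ →L[ℂ] H)
    (h₁ : Function.Injective e₁) (h₂ : Function.Injective e₂)
    (e : WithLp 2 (M₁ × M₂) →L[ℂ] H)
    (he : ∀ p, e p = e₁ (WithLp.equiv 2 (M₁ × M₂) p).1 + e₂ (WithLp.equiv 2 (M₁ × M₂) p).2) :
    -- the coordinate maps on `ker e` are injective
    Function.Injective (fun p : LinearMap.ker (e : WithLp 2 (M₁ × M₂) →ₗ[ℂ] H) =>
      (WithLp.equiv 2 (M₁ × M₂) (p : WithLp 2 (M₁ × M₂))).1) ∧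
    Function.Injective (fun p : LinearMap.ker (e : WithLp 2 (M₁ × M₂) →ₗ[ℂ] H) =>
      -(WithLp.equiv 2 (M₁ × M₂) (p : WithLp 2 (M₁ × M₂))).2) ∧
    -- they are morphisms to `(M₁, e₁)`, `(M₂, e₂)` with the same composite structure map
    (∀ p : LinearMap.ker (e : WithLp 2 (M₁ × M₂) →ₗ[ℂ] H),
      e₂ (-(WithLp.equiv 2 (M₁ × M₂) (p : WithLp 2 (M₁ × M₂))).2) =
      e₁ (WithLp.equiv 2 (M₁ × M₂) (p : WithLp 2 (M₁ × M₂))).1) ∧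
    -- universal property
    (∀ (N : Type u) (_ : NormedAddCommGroup N), ∀ (_ : InnerProductSpace ℂ N)
        (_ : CompleteSpace N) (g : N →L[ℂ] H), Function.Injective g →
      ∀ (hm₁ : N →L[ℂ] M₁) (hm₂ : N →L[ℂ] M₂),
        Function.Injective hm₁ → Function.Injective hm₂ →
        e₁.comp hm₁ = g → e₂.comp hm₂ = g →
        ∃! h : N →L[ℂ] ↥(LinearMap.ker (e : WithLp 2 (M₁ × M₂) →ₗ[ℂ] H)),
          Function.Injective h ∧
          (∀ n : N, (WithLp.equiv 2 (M₁ × M₂) ((h n : ↥(LinearMap.ker (e : WithLp 2 (M₁ × M₂) →ₗ[ℂ] H))) :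
              WithLp 2 (M₁ × M₂))).1 = hm₁ n) ∧
          (∀ n : N, -(WithLp.equiv 2 (M₁ × M₂) ((h n : ↥(LinearMap.ker (e : WithLp 2 (M₁ × M₂) →ₗ[ℂ] H))) :
              WithLp 2 (M₁ × M₂))).2 = hm₂ n) ∧
          (∀ n : N, e₁ ((WithLp.equiv 2 (M₁ × M₂) ((h n : ↥(LinearMap.ker (e : WithLp 2 (M₁ × M₂) →ₗ[ℂ] H))) :
              WithLp 2 (M₁ × M₂))).1) = g n)) := by
  have hfst := injective_fst_ker (e := e.toLinearMap) he h₂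
  refine ⟨hfst, injective_neg_snd_ker (e := e.toLinearMap) he h₁,
    map_neg_snd_eq_map_fst_of_mem_ker (e := e.toLinearMap) he, ?_⟩
  intro N _ _ _ g _ hm₁ hm₂ hinj₁ _ hc₁ hc₂
  obtain ⟨h, hh⟩ := exists_lift_ker_of_comp_eq he hc₁ hc₂
  refine ⟨h, ⟨?_, fun n => (hh n).1, fun n => (hh n).2, fun n => ?_⟩, ?_⟩
  · have hcomp : (fun x => (WithLp.equiv 2 (M₁ × M₂) x.1).1) ∘ h = hm₁ := funext fun n => (hh n).1
    exact Function.Injective.of_comp (hcomp ▸ hinj₁)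
  · rw [(hh n).1, ← hc₁, ContinuousLinearMap.comp_apply]
  · rintro h' ⟨-, hh', -, -⟩
    exact ContinuousLinearMap.ext fun n => hfst ((hh' n).trans (hh n).1.symm)

/-- In the slice category of pairs `(M, e)` of a Hilbert space with a bounded
injective linear map into a fixed Hilbert space `H`, the meet
`(ker e, e₁ ∘ P_{M₁}|_{ker e})` — where `e : M₁ ⊕₂ M₂ → H`, `e(ξ,η) = e₁ ξ + e₂ η` — is a
product of `(M₁, e₁)` and `(M₂, e₂)`: the coordinate maps `f₁(ξ,η) = ξ` and `f₂(ξ,η) = −η`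
restricted to `ker e` are injective morphisms to `(M₁, e₁)` and `(M₂, e₂)`, and for any object
`(N, g)` with morphisms `h_j : (N, g) → (M_j, e_j)` the map `h = (h₁, −h₂)` takes values in
`ker e`, satisfies `f_j ∘ h = h_j` and `e₁ P_{M₁} h = g`, and is the unique such morphism. -/
theorem meet_is_product
    {H M₁ M₂ : Type*}
    [NormedAddCommGroup H] [InnerProductSpace ℂ H] [CompleteSpace H]
    [NormedAddCommGroup M₁] [InnerProductSpace ℂ M₁] [CompleteSpace M₁]
    [NormedAddCommGroup M₂] [InnerProductSpace ℂ M₂] [CompleteSpace M₂]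
    (e₁ : M₁ →L[ℂ] H) (e₂ : M₂ →L[ℂ] H)
    (h₁ : Function.Injective e₁) (h₂ : Function.Injective e₂)
    (e : WithLp 2 (M₁ × M₂) →L[ℂ] H)
    (he : ∀ p, e p = e₁ (WithLp.equiv 2 (M₁ × M₂) p).1 + e₂ (WithLp.equiv 2 (M₁ × M₂) p).2) :
    -- the coordinate maps on `ker e` are injective
    Function.Injective (fun p : LinearMap.ker (e : WithLp 2 (M₁ × M₂) →ₗ[ℂ] H) =>
      (WithLp.equiv 2 (M₁ × M₂) (p : WithLp 2 (M₁ × M₂))).1) ∧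
    Function.Injective (fun p : LinearMap.ker (e : WithLp 2 (M₁ × M₂) →ₗ[ℂ] H) =>
      -(WithLp.equiv 2 (M₁ × M₂) (p : WithLp 2 (M₁ × M₂))).2) ∧
    -- they are morphisms to `(M₁, e₁)`, `(M₂, e₂)` with the same composite structure map
    (∀ p : LinearMap.ker (e : WithLp 2 (M₁ × M₂) →ₗ[ℂ] H),
      e₂ (-(WithLp.equiv 2 (M₁ × M₂) (p : WithLp 2 (M₁ × M₂))).2) =
      e₁ (WithLp.equiv 2 (M₁ × M₂) (p : WithLp 2 (M₁ × M₂))).1) ∧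
    -- universal property
    (∀ (N : Type u) (_ : NormedAddCommGroup N), ∀ (_ : InnerProductSpace ℂ N)
        (_ : CompleteSpace N) (g : N →L[ℂ] H), Function.Injective g →
      ∀ (hm₁ : N →L[ℂ] M₁) (hm₂ : N →L[ℂ] M₂),
        Function.Injective hm₁ → Function.Injective hm₂ →
        e₁.comp hm₁ = g → e₂.comp hm₂ = g →
        ∃! h : N →L[ℂ] ↥(LinearMap.ker (e : WithLp 2 (M₁ × M₂) →ₗ[ℂ] H)),
          Function.Injective h ∧
          (∀ n : N, (WithLp.equiv 2 (M₁ × M₂) ((h n : ↥(LinearMap.ker (e : WithLp 2 (M₁ × M₂) →ₗ[ℂ] H))) :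
              WithLp 2 (M₁ × M₂))).1 = hm₁ n) ∧
          (∀ n : N, -(WithLp.equiv 2 (M₁ × M₂) ((h n : ↥(LinearMap.ker (e : WithLp 2 (M₁ × M₂) →ₗ[ℂ] H))) :
              WithLp 2 (M₁ × M₂))).2 = hm₂ n) ∧
          (∀ n : N, e₁ ((WithLp.equiv 2 (M₁ × M₂) ((h n : ↥(LinearMap.ker (e : WithLp 2 (M₁ × M₂) →ₗ[ℂ] H))) :
              WithLp 2 (M₁ × M₂))).1) = g n)) :=
  meet_is_product_general e₁ e₂ h₁ h₂ e he
end
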